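/- Let p ≥ 2 be a real number and let n ∈ ℕ. For all vectors x, y ∈ ℝⁿ (with the Euclidean norm |·| and inner product ⟨·,·⟩) one has ⟨|x|^{p-2} x − |y|^{p-2} y, x − y⟩ ≥ 2^{2-p} |x − y|^p. -/
import Mathlib

open scoped RealInnerProductSpace

/-- Two-point convexity: `((a+b)/2)^r ≤ (a^r + b^r)/2` for `r ≥ 1`. -/
lemma aux_convex (r a b : ℝ) (hr : 1 ≤ r) (ha : 0 ≤ a) (hb : 0 ≤ b) :
    ((a + b) / 2) ^ r ≤ (a ^ r + b ^ r) / 2 := by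
  have h := (convexOn_rpow hr).2 (Set.mem_Ici.2 ha) (Set.mem_Ici.2 hb)
    (by norm_num : (0:ℝ) ≤ 1/2) (by norm_num : (0:ℝ) ≤ 1/2) (by norm_num)
  simp only [smul_eq_mul] at h
  calc ((a + b) / 2) ^ r = (1/2 * a + 1/2 * b) ^ r := by ring_nf
    _ ≤ 1/2 * a ^ r + 1/2 * b ^ r := h
    _ = (a ^ r + b ^ r) / 2 := by ring

lemma key (q a b s : ℝ) (hq : 0 ≤ q) (ha : 0 ≤ a) (hb : 0 ≤ b) (hs : 0 ≤ s)
    (hsab : s ≤ a + b) :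
    2 ^ (-q) * s ^ (q + 2) ≤
      (a ^ q + b ^ q) * s ^ 2 / 2 + (a ^ q - b ^ q) * (a ^ 2 - b ^ 2) / 2 := by
  have hab : 0 ≤ a + b := by linarith
  have hC : 0 ≤ (a ^ q - b ^ q) * (a ^ 2 - b ^ 2) := by
    rcases le_total a b with h | h
    · have h1 : a ^ q ≤ b ^ q := Real.rpow_le_rpow ha h hq
      have h2 : a ^ 2 ≤ b ^ 2 := by nlinarith
      nlinarith
    · have h1 : b ^ q ≤ a ^ q := Real.rpow_le_rpow hb h hq
      have h2 : b ^ 2 ≤ a ^ 2 := by nlinarith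
      nlinarith
  -- endpoint inequality
  have hconv : ((a + b) / 2) ^ (q + 1) ≤ (a ^ (q+1) + b ^ (q+1)) / 2 :=
    aux_convex (q+1) a b (by linarith) ha hb
  have hq1 : q + 1 ≠ 0 := by positivity
  have haq : a ^ (q+1) = a ^ q * a := by
    rw [Real.rpow_add' ha hq1, Real.rpow_one]
  have hbq : b ^ (q+1) = b ^ q * b := by
    rw [Real.rpow_add' hb hq1, Real.rpow_one]
  have hDdef : (2:ℝ) ^ (-q) * (a + b) ^ q = ((a+b)/2) ^ q := by
    rw [Real.div_rpow hab (by norm_num), Real.rpow_neg (by norm_num)]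
    ring
  have hE : 2 ^ (-q) * (a + b) ^ q * (a + b) ^ 2 ≤
      (a ^ q + b ^ q) * (a + b) ^ 2 / 2 + (a ^ q - b ^ q) * (a ^ 2 - b ^ 2) / 2 := by
    have h1 : ((a+b)/2) ^ (q+1) = ((a+b)/2) ^ q * ((a+b)/2) := by
      rw [Real.rpow_add' (by positivity) hq1, Real.rpow_one]
    have h2 : ((a+b)/2) ^ q * ((a+b)/2) ≤ (a ^ q * a + b ^ q * b) / 2 := by
      rw [← h1]; rw [haq, hbq] at hconv; exact hconv
    have h3 : ((a+b)/2) ^ q * ((a+b)/2) * (a+b) ≤ (a ^ q * a + b ^ q * b) / 2 * (a+b) :=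
      mul_le_mul_of_nonneg_right h2 hab
    rw [hDdef]
    nlinarith [h3]
  rcases eq_or_lt_of_le hs with hs0 | hs0
  · rw [← hs0, Real.zero_rpow (by positivity : q + 2 ≠ 0)]
    nlinarith [hC]
  · have hsplit : s ^ (q + 2) = s ^ q * s ^ 2 := by
      rw [Real.rpow_add hs0]
      norm_num [Real.rpow_natCast]
    have hsq : s ^ q ≤ (a + b) ^ q := Real.rpow_le_rpow hs hsab hq
    have hstep : 2 ^ (-q) * s ^ (q + 2) ≤ 2 ^ (-q) * (a + b) ^ q * s ^ 2 := by
      rw [hsplit]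
      have h2q : (0:ℝ) < 2 ^ (-q) := Real.rpow_pos_of_pos (by norm_num) _
      nlinarith [sq_nonneg s, mul_le_mul_of_nonneg_right hsq (sq_nonneg s)]
    set D := (2:ℝ) ^ (-q) * (a + b) ^ q with hD
    rcases le_total D ((a ^ q + b ^ q) / 2) with hcase | hcase
    · have : D * s ^ 2 ≤ (a ^ q + b ^ q) * s ^ 2 / 2 := by nlinarith [sq_nonneg s]
      linarith [hstep, this, hC]
    · have hs2 : s ^ 2 ≤ (a + b) ^ 2 := by nlinarith
      have h4 : (D - (a ^ q + b ^ q) / 2) * s ^ 2 ≤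
          (D - (a ^ q + b ^ q) / 2) * (a + b) ^ 2 :=
        mul_le_mul_of_nonneg_left hs2 (by linarith)
      calc 2 ^ (-q) * s ^ (q + 2) ≤ D * s ^ 2 := hstep
        _ = (a ^ q + b ^ q) * s ^ 2 / 2 + (D - (a ^ q + b ^ q) / 2) * s ^ 2 := by ring
        _ ≤ (a ^ q + b ^ q) * s ^ 2 / 2 + (D - (a ^ q + b ^ q) / 2) * (a + b) ^ 2 := by
            linarith
        _ = (a ^ q + b ^ q) * s ^ 2 / 2
            + (D * (a + b) ^ 2 - (a ^ q + b ^ q) * (a + b) ^ 2 / 2) := by ring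
        _ ≤ (a ^ q + b ^ q) * s ^ 2 / 2 + (a ^ q - b ^ q) * (a ^ 2 - b ^ 2) / 2 := by
            linarith

/-- For `p ≥ 2` and vectors `x, y` in Euclidean space,
`⟨|x|^{p-2} x − |y|^{p-2} y, x − y⟩ ≥ 2^{2-p} |x − y|^p`. -/
theorem stmt_0 (p : ℝ) (hp : 2 ≤ p) (n : ℕ) (x y : EuclideanSpace ℝ (Fin n)) :
    (2 : ℝ) ^ (2 - p) * ‖x - y‖ ^ p ≤
      ⟪(‖x‖ ^ (p - 2)) • x - (‖y‖ ^ (p - 2)) • y, x - y⟫ := by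
  have hinner : ⟪(‖x‖ ^ (p - 2)) • x - (‖y‖ ^ (p - 2)) • y, x - y⟫ =
      ‖x‖ ^ (p-2) * ‖x‖ ^ 2 + ‖y‖ ^ (p-2) * ‖y‖ ^ 2
        - (‖x‖ ^ (p-2) + ‖y‖ ^ (p-2)) * ⟪x, y⟫ := by
    simp only [inner_sub_left, inner_sub_right, real_inner_smul_left,
      real_inner_self_eq_norm_sq, real_inner_comm y x]
    ring
  have hst : ‖x - y‖ ^ 2 = ‖x‖ ^ 2 - 2 * ⟪x, y⟫ + ‖y‖ ^ 2 := norm_sub_sq_real x y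
  have K := key (p - 2) ‖x‖ ‖y‖ ‖x - y‖ (by linarith) (norm_nonneg x) (norm_nonneg y)
    (norm_nonneg _) (norm_sub_le x y)
  rw [show p - 2 + 2 = p by ring, show -(p-2) = 2 - p by ring] at K
  rw [hinner]
  rw [hst] at K
  nlinarith [K]
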